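/- arXiv:2010.08086 — 6 statements merged into one kernel-verified Lean document; each statement's English description precedes it below -/
import Mathlib

section
/- For all real r, ρ > 0 with r ≠ ρ, the integral ∫₀^{2π} (ρ·cos θ + r)/(ρ² + 2ρr·cos θ + r²) dθ equals 2π/r if r > ρ, and equals 0 if ρ > r. Equivalently, it equals π(sgn(r² − ρ²) + 1)/r. -/
/-!
The integrand is the real part of `(r + ρ z)⁻¹` on the unit circle `z = e^{iθ}`, so the integral
is `2π` times the real part of the circle average of `z ↦ (r + ρ z)⁻¹`. If `ρ < r` this function
is holomorphic on the closed unit disc and the mean value property gives `1/r`. If `r < ρ`, the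
substitution `z ↦ z⁻¹` (which preserves the average over the unit circle) turns it into
`z ↦ z (ρ + r z)⁻¹`, holomorphic on the disc and zero at the centre, so the average is `0`.
-/

open Real MeasureTheory Metric

lemma add_mul_ne_zero_of_norm_ne {a b z : ℂ} (h : ‖b‖ * ‖z‖ ≠ ‖a‖) : a + b * z ≠ 0 := by
  intro h0
  rw [eq_neg_of_add_eq_zero_left h0, norm_neg, norm_mul] at h
  exact h rfl

lemma diffContOnCl_inv_add_mul {a b : ℂ} (h : ‖b‖ < ‖a‖) :
    DiffContOnCl ℂ (fun z ↦ (a + b * z)⁻¹) (ball 0 |1|) := by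
  refine DifferentiableOn.diffContOnCl fun z hz ↦ ?_
  rw [abs_one, closure_ball 0 one_ne_zero, mem_closedBall_zero_iff] at hz
  have hbz : ‖b‖ * ‖z‖ < ‖a‖ := (mul_le_of_le_one_right (norm_nonneg b) hz).trans_lt h
  exact ((differentiableAt_const a).add (differentiableAt_id.const_mul b)).inv
    (add_mul_ne_zero_of_norm_ne hbz.ne) |>.differentiableWithinAt

lemma circleIntegrable_inv_add_mul {a b : ℂ} (h : ‖a‖ ≠ ‖b‖) :
    CircleIntegrable (fun z ↦ (a + b * z)⁻¹) 0 1 := by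
  refine ContinuousOn.circleIntegrable zero_le_one (ContinuousOn.inv₀ (by fun_prop) fun z hz ↦ ?_)
  rw [mem_sphere_zero_iff_norm] at hz
  exact add_mul_ne_zero_of_norm_ne (by rw [hz, mul_one]; exact h.symm)

lemma circleAverage_inv_add_mul_of_norm_lt {a b : ℂ} (h : ‖b‖ < ‖a‖) :
    circleAverage (fun z ↦ (a + b * z)⁻¹) 0 1 = a⁻¹ := by
  simpa using (diffContOnCl_inv_add_mul h).circleAverage

lemma circleAverage_inv_add_mul_of_norm_gt {a b : ℂ} (h : ‖a‖ < ‖b‖) :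
    circleAverage (fun z ↦ (a + b * z)⁻¹) 0 1 = 0 := by
  have hinv : Set.EqOn (fun z ↦ (a + b * z⁻¹)⁻¹) (fun z ↦ z * (b + a * z)⁻¹) (sphere 0 |1|) := by
    intro z hz
    have : z ≠ 0 := by rintro rfl; simp at hz
    simp only
    rw [show a + b * z⁻¹ = (b + a * z) * z⁻¹ by field_simp; ring, mul_inv, inv_inv, mul_comm]
  rw [← circleAverage_zero_one_congr_inv, circleAverage_congr_sphere hinv]
  simpa using (differentiable_id.diffContOnCl.smul (diffContOnCl_inv_add_mul h)).circleAverage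

lemma re_inv_add_mul_circleMap (r ρ θ : ℝ) :
    ((r + ρ * circleMap 0 1 θ : ℂ)⁻¹).re
      = (ρ * Real.cos θ + r) / (ρ^2 + 2*ρ*r*Real.cos θ + r^2) := by
  rw [Complex.inv_re, Complex.normSq_apply]
  simp only [circleMap_zero, Complex.ofReal_one, one_mul, Complex.add_re, Complex.add_im,
    Complex.mul_re, Complex.mul_im, Complex.ofReal_re, Complex.ofReal_im,
    Complex.exp_ofReal_mul_I_re, Complex.exp_ofReal_mul_I_im]
  congr 1
  · ring
  · linear_combination ρ ^ 2 * Real.sin_sq_add_cos_sq θ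

lemma integral_add_cos_div_eq_circleAverage {r ρ : ℝ} (h : |r| ≠ |ρ|) :
    ∫ θ in (0:ℝ)..(2*π), (ρ * Real.cos θ + r) / (ρ^2 + 2*ρ*r*Real.cos θ + r^2)
      = 2 * π * (circleAverage (fun z : ℂ ↦ (r + ρ * z)⁻¹) 0 1).re := by
  have hint := circleIntegrable_inv_add_mul (a := r) (b := ρ) (by simpa using h)
  rw [← Complex.reCLM_apply, ← Complex.reCLM.circleAverage_comp_comm hint, circleAverage_def,
    smul_eq_mul, ← mul_assoc, mul_inv_cancel₀ two_pi_pos.ne', one_mul]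
  simp only [Function.comp_def, Complex.reCLM_apply, re_inv_add_mul_circleMap]

lemma integral_add_cos_div_eq {r ρ : ℝ} (h : |r| ≠ |ρ|) :
    ∫ θ in (0:ℝ)..(2*π), (ρ * Real.cos θ + r) / (ρ^2 + 2*ρ*r*Real.cos θ + r^2)
      = if |ρ| < |r| then 2 * π / r else 0 := by
  rw [integral_add_cos_div_eq_circleAverage h]
  split_ifs with hlt
  · rw [circleAverage_inv_add_mul_of_norm_lt (by simpa using hlt)]
    rw [← Complex.ofReal_inv, Complex.ofReal_re, div_eq_mul_inv]
  · rw [circleAverage_inv_add_mul_of_norm_gt (by simpa using (not_lt.1 hlt).lt_of_ne h)]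
    simp

open Real MeasureTheory in
/-- Evaluation of the angular integral ∫₀^{2π} (ρ cos θ + r)/(ρ² + 2ρr cos θ + r²) dθ. -/
theorem stmt2 (r ρ : ℝ) (hr : 0 < r) (hρ : 0 < ρ) (hne : r ≠ ρ) :
    ((r > ρ →
        (∫ θ in (0:ℝ)..(2*π),
          (ρ * Real.cos θ + r) / (ρ^2 + 2*ρ*r*Real.cos θ + r^2)) = 2*π/r) ∧
     (ρ > r →
        (∫ θ in (0:ℝ)..(2*π),
          (ρ * Real.cos θ + r) / (ρ^2 + 2*ρ*r*Real.cos θ + r^2)) = 0)) ∧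
    (∫ θ in (0:ℝ)..(2*π),
        (ρ * Real.cos θ + r) / (ρ^2 + 2*ρ*r*Real.cos θ + r^2))
      = π * (Real.sign (r^2 - ρ^2) + 1) / r := by
  have h := integral_add_cos_div_eq (r := r) (ρ := ρ) (by rwa [abs_of_pos hr, abs_of_pos hρ])
  rw [abs_of_pos hr, abs_of_pos hρ] at h
  rcases hne.lt_or_gt with hlt | hgt
  · rw [if_neg hlt.not_gt] at h
    have hs : Real.sign (r^2 - ρ^2) = -1 := Real.sign_of_neg (by nlinarith)
    exact ⟨⟨fun h' ↦ absurd h' hlt.not_gt, fun _ ↦ h⟩, by rw [h, hs]; ring⟩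
  · rw [if_pos hgt] at h
    have hs : Real.sign (r^2 - ρ^2) = 1 := Real.sign_of_pos (by nlinarith)
    exact ⟨⟨fun _ ↦ h, fun h' ↦ absurd h' hgt.not_gt⟩, by rw [h, hs]; ring⟩
end

section
/- For all real r, ρ > 0 with r ≠ ρ: if r > ρ then ∫₀^{2π} log(r² + ρ² + 2rρ·cos θ)·(r + ρ·cos θ)/(r² + ρ² + 2rρ·cos θ) dθ = (2π/r)·(log(r²) + log(1 − ρ²/r²)); and if ρ > r then the same integral equals −(2π/r)·log(1 − r²/ρ²). -/
/-!
Write `A = r² + ρ² + 2rρ cos θ = ‖r + ρe^{iθ}‖²` and `K(r, ρ) = logKernel r ρ` for the integrand.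

For `ρ < r`, `log (r + z)` is holomorphic on the closed disc `‖z‖ ≤ ρ`, and with `u = r + z` one has
`K = Re (log u / u) + Re (log u / conj u)`, where `conj u = r + ρ² / z` on the circle `‖z‖ = ρ`.
The mean value property and Cauchy's formula at the pole `-ρ² / r` then give
`∫ K(r, ρ) = (2π / r) log (r² - ρ²)`.

Since `A` is symmetric in `r` and `ρ`, `r K(r, ρ) + ρ K(ρ, r) = log A`, whose integral is
`4π log (max r ρ)` by Jensen's formula. This reduces the case `r < ρ` to the previous one.
-/

open Real MeasureTheory Complex ComplexConjugate Metric

lemma norm_ofReal_add_circleMap_sq (r ρ θ : ℝ) :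
    ‖(r : ℂ) + circleMap 0 ρ θ‖ ^ 2 = r ^ 2 + ρ ^ 2 + 2 * r * ρ * Real.cos θ := by
  rw [← normSq_eq_norm_sq, normSq_apply]
  simp only [add_re, add_im, ofReal_re, ofReal_im, circleMap_zero_re, circleMap_zero_im]
  linear_combination ρ ^ 2 * Real.sin_sq_add_cos_sq θ

lemma re_ofReal_add_circleMap (r ρ θ : ℝ) :
    ((r : ℂ) + circleMap 0 ρ θ).re = r + ρ * Real.cos θ := by
  simp [circleMap_zero_re]

lemma log_norm_sq_mul_re_div_norm_sq (u : ℂ) :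
    Real.log (‖u‖ ^ 2) * u.re / ‖u‖ ^ 2 = (log u / u).re + (log u / conj u).re := by
  have h : log u / u + log u / conj u = log u * ((2 * (u⁻¹).re : ℝ) : ℂ) := by
    rw [← add_conj, div_eq_mul_inv, div_eq_mul_inv, ← map_inv₀, mul_add]
  rw [← add_re, h, re_mul_ofReal, log_re, inv_re, normSq_eq_norm_sq, Real.log_pow]
  push_cast
  ring

lemma conj_eq_sq_div_of_mem_sphere {ρ : ℝ} {z : ℂ} (hz : z ∈ sphere 0 ρ) :
    conj z = (ρ ^ 2 : ℝ) / z := by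
  rcases eq_or_ne z 0 with rfl | hz0
  · simp
  rw [eq_div_iff hz0, mul_comm, mul_conj, normSq_eq_norm_sq, ← mem_sphere_zero_iff_norm.mp hz]

lemma integral_re_comp_circleMap {f : ℂ → ℂ} {c : ℂ} {R : ℝ} (hf : CircleIntegrable f c R) :
    ∫ θ in (0 : ℝ)..2 * π, (f (circleMap c R θ)).re = 2 * π * (circleAverage f c R).re := by
  rw [circleAverage_def, smul_re, smul_eq_mul, ← mul_assoc, mul_inv_cancel₀ (by positivity),
    one_mul]
  exact intervalIntegral.intervalIntegral_re hf

lemma ofReal_add_mem_slitPlane {r : ℝ} {z : ℂ} (hz : ‖z‖ < r) : (r : ℂ) + z ∈ slitPlane := by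
  refine mem_slitPlane_iff.mpr (Or.inl ?_)
  have := (abs_le.mp (abs_re_le_norm z)).1
  simp only [add_re, ofReal_re]
  linarith

lemma differentiableOn_log_ofReal_add (r : ℝ) :
    DifferentiableOn ℂ (fun z => Complex.log (r + z)) (ball 0 r) := fun z hz =>
  ((differentiableAt_const _).add differentiableAt_id).clog
    (ofReal_add_mem_slitPlane (by simpa using hz)) |>.differentiableWithinAt

lemma circleAverage_log_ofReal_add_div {r ρ : ℝ} (h : |ρ| < r) :
    circleAverage (fun z => Complex.log (r + z) / (r + z)) 0 ρ = Real.log r / r := by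
  have hf : DiffContOnCl ℂ (fun z => Complex.log (r + z) / (r + z)) (ball 0 |ρ|) :=
    ((differentiableOn_log_ofReal_add r).div (by fun_prop) fun z hz =>
      slitPlane_ne_zero (ofReal_add_mem_slitPlane (by simpa using hz))).diffContOnCl_ball
      (closedBall_subset_ball h)
  rw [hf.circleAverage, add_zero, ofReal_log ((abs_nonneg ρ).trans h.le)]

lemma circleAverage_log_ofReal_add_div_conj {r ρ : ℝ} (hρ : 0 < ρ) (h : ρ < r) :
    circleAverage (fun z => Complex.log (r + z) / conj (r + z)) 0 ρ
      = Real.log (r - ρ ^ 2 / r) / r := by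
  have hr : 0 < r := hρ.trans h
  have hg : DiffContOnCl ℂ (fun z => Complex.log (r + z) / r) (ball 0 |ρ|) :=
    ((differentiableOn_log_ofReal_add r).div_const _).diffContOnCl_ball
      (closedBall_subset_ball ((abs_of_pos hρ).trans_lt h))
  have hpole : (-(ρ ^ 2 / r : ℝ) : ℂ) ∈ ball 0 |ρ| := by
    rw [mem_ball_zero_iff, norm_neg, norm_real, Real.norm_eq_abs, abs_of_pos (by positivity),
      abs_of_pos hρ, div_lt_iff₀ hr]
    nlinarith
  have hpos : 0 < r - ρ ^ 2 / r := by
    rw [sub_pos, div_lt_iff₀ hr]; nlinarith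
  calc _ = circleAverage
        (fun z => ((z - 0) / (z - (-(ρ ^ 2 / r : ℝ)))) • (Complex.log (r + z) / r)) 0 ρ := by
        refine circleAverage_congr_sphere fun z hz => ?_
        have hz0 : z ≠ 0 := ne_of_mem_sphere hz (by positivity)
        have hzp : z - (-(ρ ^ 2 / r : ℝ)) ≠ 0 := sub_ne_zero.mpr fun he =>
          (mem_ball_zero_iff.mp hpole).ne (by rw [← he, mem_sphere_zero_iff_norm.mp hz])
        rw [abs_of_pos hρ] at hz
        rw [map_add, conj_ofReal, conj_eq_sq_div_of_mem_sphere hz, smul_eq_mul, sub_zero,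
          sub_neg_eq_add]
        rw [sub_neg_eq_add] at hzp
        push_cast at hzp ⊢
        have hrC : (r : ℂ) ≠ 0 := ofReal_ne_zero.mpr hr.ne'
        field_simp
    _ = _ := by
        rw [hg.circleAverage_smul_div hpole, ← sub_eq_add_neg, ← ofReal_sub, ← ofReal_log hpos.le]

theorem integral_log_sq_add_sq_add_mul_cos {r ρ : ℝ} (hr : 0 ≤ r) (hρ : 0 < ρ) :
    ∫ θ in (0 : ℝ)..2 * π, Real.log (r ^ 2 + ρ ^ 2 + 2 * r * ρ * Real.cos θ)
      = 4 * π * Real.log (max ρ r) := by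
  have hpt : ∀ θ, Real.log (r ^ 2 + ρ ^ 2 + 2 * r * ρ * Real.cos θ)
      = 2 * Real.log ‖circleMap 0 ρ θ - (-r : ℂ)‖ := fun θ => by
    rw [← norm_ofReal_add_circleMap_sq, Real.log_pow, sub_neg_eq_add, add_comm]
    push_cast; ring
  have hmean := circleAverage_log_norm_sub_const_eq_log_radius_add_posLog (a := (-r : ℂ)) (c := 0)
    hρ.ne'
  rw [circleAverage_def, zero_sub, neg_neg, Complex.norm_real, Real.norm_eq_abs, abs_of_nonneg hr,
    posLog_eq_log_max_one (by positivity), ← Real.log_mul hρ.ne' (by positivity),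
    mul_max_of_nonneg _ _ hρ.le, mul_inv_cancel_left₀ hρ.ne', mul_one, smul_eq_mul] at hmean
  simp_rw [hpt, intervalIntegral.integral_const_mul]
  rw [← hmean]
  field_simp
  ring

noncomputable def logKernel (r ρ θ : ℝ) : ℝ :=
  Real.log (r ^ 2 + ρ ^ 2 + 2 * r * ρ * Real.cos θ) * (r + ρ * Real.cos θ)
    / (r ^ 2 + ρ ^ 2 + 2 * r * ρ * Real.cos θ)

theorem integral_logKernel_of_lt {r ρ : ℝ} (hρ : 0 < ρ) (h : ρ < r) :
    ∫ θ in (0 : ℝ)..2 * π, logKernel r ρ θ = 2 * π / r * Real.log (r ^ 2 - ρ ^ 2) := by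
  have hr : 0 < r := hρ.trans h
  set f₁ : ℂ → ℂ := fun z => Complex.log (r + z) / (r + z)
  set f₂ : ℂ → ℂ := fun z => Complex.log (r + z) / conj (r + z)
  have hslit : ∀ z ∈ sphere (0 : ℂ) ρ, (r : ℂ) + z ∈ slitPlane := fun z hz =>
    ofReal_add_mem_slitPlane (by rw [mem_sphere_zero_iff_norm.mp hz]; exact h)
  have hlog : ContinuousOn (fun z : ℂ => Complex.log (r + z)) (sphere 0 ρ) :=
    (continuousOn_const.add continuousOn_id).clog hslit
  have hint₁ : CircleIntegrable f₁ 0 ρ :=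
    (hlog.div (by fun_prop) fun z hz => slitPlane_ne_zero (hslit z hz)).circleIntegrable hρ.le
  have hint₂ : CircleIntegrable f₂ 0 ρ :=
    (hlog.div (by fun_prop) fun z hz =>
      (map_ne_zero _).mpr (slitPlane_ne_zero (hslit z hz))).circleIntegrable hρ.le
  have hpt : ∀ θ, logKernel r ρ θ = ((f₁ + f₂) (circleMap 0 ρ θ)).re := fun θ => by
    rw [logKernel, ← norm_ofReal_add_circleMap_sq, ← re_ofReal_add_circleMap,
      log_norm_sq_mul_re_div_norm_sq]
    rfl
  have hpos : 0 < r - ρ ^ 2 / r := by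
    rw [sub_pos, div_lt_iff₀ hr]; nlinarith
  calc ∫ θ in (0 : ℝ)..2 * π, logKernel r ρ θ
      = 2 * π * (circleAverage f₁ 0 ρ + circleAverage f₂ 0 ρ).re := by
        rw [intervalIntegral.integral_congr fun θ _ => hpt θ,
          integral_re_comp_circleMap (hint₁.add hint₂), circleAverage_add hint₁ hint₂]
    _ = 2 * π * (Real.log r / r + Real.log (r - ρ ^ 2 / r) / r) := by
        rw [circleAverage_log_ofReal_add_div ((abs_of_pos hρ).trans_lt h),
          circleAverage_log_ofReal_add_div_conj hρ h]
        norm_cast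
    _ = 2 * π / r * Real.log (r ^ 2 - ρ ^ 2) := by
        rw [← add_div, ← Real.log_mul hr.ne' hpos.ne']
        field_simp

lemma sq_add_sq_add_mul_cos_pos {r ρ : ℝ} (hr : 0 ≤ r) (hρ : 0 ≤ ρ) (hne : r ≠ ρ) (θ : ℝ) :
    0 < r ^ 2 + ρ ^ 2 + 2 * r * ρ * Real.cos θ := by
  have hcos : 0 ≤ 1 + Real.cos θ := by linarith [Real.neg_one_le_cos θ]
  nlinarith [mul_nonneg (mul_nonneg hr hρ) hcos, sq_pos_of_ne_zero (sub_ne_zero.mpr hne)]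

lemma continuous_logKernel {r ρ : ℝ} (hA : ∀ θ, 0 < r ^ 2 + ρ ^ 2 + 2 * r * ρ * Real.cos θ) :
    Continuous (logKernel r ρ) := by
  unfold logKernel
  fun_prop (disch := exact fun θ => (hA θ).ne')

lemma mul_integral_logKernel_add_mul_integral_logKernel_swap {r ρ : ℝ} (hr : 0 ≤ r) (hρ : 0 ≤ ρ)
    (hne : r ≠ ρ) :
    r * (∫ θ in (0 : ℝ)..2 * π, logKernel r ρ θ) + ρ * ∫ θ in (0 : ℝ)..2 * π, logKernel ρ r θ
      = ∫ θ in (0 : ℝ)..2 * π, Real.log (r ^ 2 + ρ ^ 2 + 2 * r * ρ * Real.cos θ) := by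
  have hA := sq_add_sq_add_mul_cos_pos hr hρ hne
  have hA' := sq_add_sq_add_mul_cos_pos hρ hr hne.symm
  rw [← intervalIntegral.integral_const_mul, ← intervalIntegral.integral_const_mul,
    ← intervalIntegral.integral_add (((continuous_logKernel hA).const_mul r).intervalIntegrable _ _)
      (((continuous_logKernel hA').const_mul ρ).intervalIntegrable _ _)]
  refine intervalIntegral.integral_congr fun θ _ => ?_
  simp only [logKernel]
  rw [show ρ ^ 2 + r ^ 2 + 2 * ρ * r * Real.cos θ = r ^ 2 + ρ ^ 2 + 2 * r * ρ * Real.cos θ by ring]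
  rw [mul_div_assoc', mul_div_assoc', ← add_div, div_eq_iff (hA θ).ne']
  ring

theorem stmt3_general (r ρ : ℝ) (hr : 0 < r) (hρ : 0 < ρ) :
    (r > ρ →
      (∫ θ in (0:ℝ)..(2*π),
          Real.log (r^2 + ρ^2 + 2*r*ρ*Real.cos θ) * (r + ρ*Real.cos θ)
            / (r^2 + ρ^2 + 2*r*ρ*Real.cos θ))
        = (2*π/r) * (Real.log (r^2) + Real.log (1 - ρ^2/r^2))) ∧
    (ρ > r →
      (∫ θ in (0:ℝ)..(2*π),
          Real.log (r^2 + ρ^2 + 2*r*ρ*Real.cos θ) * (r + ρ*Real.cos θ)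
            / (r^2 + ρ^2 + 2*r*ρ*Real.cos θ))
        = -(2*π/r) * Real.log (1 - r^2/ρ^2)) := by
  refine ⟨fun h => ?_, fun h => ?_⟩
  · have h1 : 0 < 1 - ρ ^ 2 / r ^ 2 := by
      rw [sub_pos, div_lt_one (by positivity)]; nlinarith
    rw [← Real.log_mul (by positivity) h1.ne', mul_one_sub, mul_div_cancel₀ _ (by positivity)]
    exact integral_logKernel_of_lt hρ h
  · have hsum := mul_integral_logKernel_add_mul_integral_logKernel_swap hr.le hρ.le h.ne
    rw [integral_logKernel_of_lt hr h, integral_log_sq_add_sq_add_mul_cos hr.le hρ,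
      max_eq_left h.le] at hsum
    have h1 : 1 - r ^ 2 / ρ ^ 2 = (ρ ^ 2 - r ^ 2) / ρ ^ 2 := by field_simp
    rw [h1, Real.log_div (by nlinarith) (by positivity), Real.log_pow]
    change ∫ θ in (0 : ℝ)..2 * π, logKernel r ρ θ = _
    field_simp at hsum ⊢
    linear_combination hsum

/-- Evaluation of the angular integral with a logarithmic weight:
∫₀^{2π} log(r² + ρ² + 2rρ cos θ)·(r + ρ cos θ)/(r² + ρ² + 2rρ cos θ) dθ. -/
theorem stmt3 (r ρ : ℝ) (hr : 0 < r) (hρ : 0 < ρ) (hne : r ≠ ρ) :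
    (r > ρ →
      (∫ θ in (0:ℝ)..(2*π),
          Real.log (r^2 + ρ^2 + 2*r*ρ*Real.cos θ) * (r + ρ*Real.cos θ)
            / (r^2 + ρ^2 + 2*r*ρ*Real.cos θ))
        = (2*π/r) * (Real.log (r^2) + Real.log (1 - ρ^2/r^2))) ∧
    (ρ > r →
      (∫ θ in (0:ℝ)..(2*π),
          Real.log (r^2 + ρ^2 + 2*r*ρ*Real.cos θ) * (r + ρ*Real.cos θ)
            / (r^2 + ρ^2 + 2*r*ρ*Real.cos θ))
        = -(2*π/r) * Real.log (1 - r^2/ρ^2)) :=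
  stmt3_general r ρ hr hρ
end

section
/- There exists a function χ : [0,∞) → ℝ of class C^∞ such that χ(x) = 0 for x ≤ 1, χ(x) = 1 for x ≥ 2, and the following three integral conditions hold: ∫₀^∞ χ(x)/x³ dx = 0, ∫₀^∞ x³·(1 − χ(x)) dx = 0, and ∫₀^∞ x³·log x·(1 − χ(x)) dx = 0. -/
/-!
Take `χ = ψ + f`, where `ψ` is a smooth step from `0` at `1` to `1` at `2` and `f` is a smooth
correction supported in `(1, 2)`. Each condition is then linear in `f`: it prescribes the moment
`∫ f w` against one of the weights `x⁻³`, `x³`, `x³ log x`. These weights are linearly independent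
on `(1, 2)`, so by the fundamental lemma of the calculus of variations no nonzero functional on `ℝ³`
kills all moment vectors of test functions on `(1, 2)`: the moment map onto `ℝ³` is surjective.
-/

open Real MeasureTheory Set Distributions

namespace TestFunction

variable {E : Type*} [NormedAddCommGroup E] [NormedSpace ℝ E] [MeasurableSpace E] [BorelSpace E]
  {μ : Measure E} [IsLocallyFiniteMeasure μ] {Ω : TopologicalSpace.Opens E}

theorem integrable_mul_of_continuousOn {w : E → ℝ} (hw : ContinuousOn w Ω) (f : 𝓓(Ω, ℝ)) :
    Integrable (fun x => f x * w x) μ :=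
  f.integrable_bilin (ContinuousLinearMap.mul ℝ ℝ) (hw.locallyIntegrableOn Ω.isOpen.measurableSet)

variable [FiniteDimensional ℝ E] [μ.IsOpenPosMeasure]

theorem eqOn_zero_of_integral_mul_eq_zero {w : E → ℝ} (hw : ContinuousOn w Ω)
    (h : ∀ f : 𝓓(Ω, ℝ), ∫ x, f x * w x ∂μ = 0) : EqOn w 0 Ω := by
  have hae := Ω.isOpen.ae_eq_zero_of_integral_contDiff_smul_eq_zero (μ := μ)
    (hw.locallyIntegrableOn Ω.isOpen.measurableSet)
    fun f hf hfc hfΩ => h ⟨f, hf, hfc, hfΩ⟩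
  exact Measure.eqOn_open_of_ae_eq ((ae_restrict_iff' Ω.isOpen.measurableSet).2 hae)
    Ω.isOpen hw continuousOn_const

theorem exists_integral_mul_eq_of_linearIndependent {ι : Type*} [Fintype ι]
    {w : ι → E → ℝ} (hw : ∀ i, ContinuousOn (w i) Ω)
    (hind : LinearIndependent ℝ fun i => (Ω : Set E).domRestrict (w i)) (c : ι → ℝ) :
    ∃ f : 𝓓(Ω, ℝ), ∀ i, ∫ x, f x * w i x ∂μ = c i := by
  have hloc i : LocallyIntegrableOn (w i) Ω μ :=
    (hw i).locallyIntegrableOn Ω.isOpen.measurableSet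
  let L : 𝓓(Ω, ℝ) →ₗ[ℝ] ι → ℝ := LinearMap.pi fun i =>
    (integralAgainstBilinCLM (ContinuousLinearMap.mul ℝ ℝ) μ (w i)).toLinearMap
  have hL (f : 𝓓(Ω, ℝ)) i : L f i = ∫ x, f x * w i x ∂μ :=
    integralAgainstBilinCLM_eq_integral (hloc i)
  suffices Function.Surjective L from
    (this c).imp fun f hf i => by rw [← hL, hf]
  rw [← LinearMap.dualMap_injective_iff, ← LinearMap.ker_eq_bot, Submodule.eq_bot_iff]
  intro φ hφ
  classical
  set u : ι → ℝ := fun i => φ fun j => if i = j then 1 else 0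
  have hφu (v : ι → ℝ) : φ v = ∑ i, u i * v i := by
    simp only [φ.pi_apply_eq_sum_univ v, smul_eq_mul, mul_comm, u]
  have hvan : EqOn (fun x => ∑ i, u i * w i x) 0 Ω := by
    refine eqOn_zero_of_integral_mul_eq_zero (μ := μ)
      (continuousOn_finsetSum _ fun i _ => (hw i).const_smul (u i)) fun f => ?_
    have := LinearMap.congr_fun hφ f
    simp only [LinearMap.dualMap_apply, LinearMap.zero_apply, hφu, hL] at this
    simp only [Finset.mul_sum, mul_left_comm (f _)]
    rw [integral_finsetSum _ fun i _ => (integrable_mul_of_continuousOn (hw i) f).const_mul (u i)]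
    simpa only [integral_const_mul] using this
  have hu : u = 0 := by
    ext i
    refine Fintype.linearIndependent_iff.1 hind u (funext fun x => ?_) i
    simpa [Set.domRestrict_apply] using hvan x.2
  ext v
  simp [hφu, hu]

end TestFunction

lemma exists_mem_Ioo_one_two_pow_six_eq {y : ℝ} (hy : y ∈ Ioo 1 64) :
    ∃ x ∈ Ioo (1:ℝ) 2, x ^ 6 = y := by
  have hx : (y ^ ((6:ℕ)⁻¹ : ℝ)) ^ 6 = y := rpow_inv_natCast_pow (by linarith [hy.1]) (by norm_num)
  have hx0 : 0 ≤ y ^ ((6:ℕ)⁻¹ : ℝ) := rpow_nonneg (by linarith [hy.1]) _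
  refine ⟨_, ⟨?_, ?_⟩, hx⟩
  · rw [← pow_lt_pow_iff_left₀ zero_le_one hx0 (by norm_num : 6 ≠ 0), hx, one_pow]
    exact hy.1
  · rw [← pow_lt_pow_iff_left₀ hx0 zero_le_two (by norm_num : 6 ≠ 0), hx]
    norm_num [hy.2]

noncomputable def momentWeights : Fin 3 → ℝ → ℝ :=
  ![fun x => (x ^ 3)⁻¹, fun x => x ^ 3, fun x => x ^ 3 * log x]

lemma continuousOn_momentWeights (i : Fin 3) : ContinuousOn (momentWeights i) (Ioi 0) := by
  fin_cases i
  · exact (continuousOn_pow 3).inv₀ fun x hx => pow_ne_zero 3 (ne_of_gt hx)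
  · exact continuousOn_pow 3
  · exact (continuousOn_pow 3).mul (continuousOn_log.mono fun x hx => ne_of_gt hx)

lemma linearIndependent_momentWeights :
    LinearIndependent ℝ fun i => (Ioo (1:ℝ) 2).domRestrict (momentWeights i) := by
  rw [Fintype.linearIndependent_iff]
  intro u hu
  have hx : ∀ x ∈ Ioo (1:ℝ) 2, u 0 * (x ^ 3)⁻¹ + u 1 * x ^ 3 + u 2 * (x ^ 3 * log x) = 0 :=
    fun x hx => by simpa [Fin.sum_univ_three, momentWeights, add_assoc] using congrFun hu ⟨x, hx⟩
  -- Multiply by `x ^ 3` and put `y = x ^ 6`; at `y = 2, 4, 8` the logarithms are multiples of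
  -- `log 2`.
  have hy : ∀ y ∈ Ioo (1:ℝ) 64, u 0 + u 1 * y + u 2 * (y * log y) / 6 = 0 := by
    intro y hy
    obtain ⟨x, hx12, rfl⟩ := exists_mem_Ioo_one_two_pow_six_eq hy
    have hx0 : x ^ 3 ≠ 0 := pow_ne_zero 3 (by linarith [hx12.1])
    rw [log_pow]
    linear_combination x ^ 3 * hx x hx12 - u 0 * mul_inv_cancel₀ hx0
  have h2 := hy 2 (by norm_num)
  have h4 := hy 4 (by norm_num)
  have h8 := hy 8 (by norm_num)
  rw [show log 4 = 2 * log 2 by rw [← log_rpow two_pos]; norm_num] at h4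
  rw [show log 8 = 3 * log 2 by rw [← log_rpow two_pos]; norm_num] at h8
  have hu2 : u 2 = 0 := by
    have : u 2 * log 2 = 0 := by linear_combination (3 / 2 : ℝ) * h8 - (9 / 2 : ℝ) * h4 + 3 * h2
    exact (mul_eq_zero.1 this).resolve_right (log_pos one_lt_two).ne'
  have hu1 : u 1 = 0 := by linear_combination (h4 - h2) / 2 - log 2 / 2 * hu2
  have hu0 : u 0 = 0 := by linear_combination h2 - 2 * hu1 - log 2 / 3 * hu2
  intro i
  fin_cases i <;> assumption

noncomputable def smoothStep (x : ℝ) : ℝ := smoothTransition (x - 1)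

lemma contDiff_smoothStep {n : ℕ∞} : ContDiff ℝ n smoothStep :=
  smoothTransition.contDiff.comp (contDiff_id.sub contDiff_const)

@[fun_prop]
lemma continuous_smoothStep : Continuous smoothStep :=
  contDiff_smoothStep (n := 0).continuous

lemma smoothStep_of_le_one {x : ℝ} (hx : x ≤ 1) : smoothStep x = 0 :=
  smoothTransition.zero_of_nonpos (by linarith)

lemma smoothStep_of_two_le {x : ℝ} (hx : 2 ≤ x) : smoothStep x = 1 :=
  smoothTransition.one_of_one_le (by linarith)

lemma Continuous.integrableOn_Ioi_of_forall_gt_eq_zero {f : ℝ → ℝ} (hf : Continuous f) {a b : ℝ}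
    (h : ∀ x, b < x → f x = 0) : IntegrableOn f (Ioi a) := by
  have hzero : IntegrableOn f (Ioi b) :=
    integrableOn_zero.congr_fun (fun x hx => (h x hx).symm) measurableSet_Ioi
  refine ((hf.integrableOn_Icc (a := a) (b := b)).union hzero).mono_set fun x hx => ?_
  by_cases hxb : x ≤ b
  · exact Or.inl ⟨le_of_lt hx, hxb⟩
  · exact Or.inr (not_le.1 hxb)

lemma integrableOn_smoothStep_div_cube : IntegrableOn (fun x => smoothStep x / x ^ 3) (Ioi 0) := by
  have hcube : IntegrableOn (fun x : ℝ => (x ^ 3)⁻¹) (Ioi 1) :=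
    (integrableOn_Ioi_rpow_of_lt (by norm_num : (-3:ℝ) < -1) one_pos).congr_fun
      (fun x hx => by simp [rpow_neg (zero_le_one.trans (le_of_lt hx))]) measurableSet_Ioi
  have hIoi : IntegrableOn (fun x => smoothStep x / x ^ 3) (Ioi 1) := by
    simp_rw [div_eq_mul_inv]
    refine hcube.bdd_mul (c := 1) continuous_smoothStep.aestronglyMeasurable
      (ae_of_all _ fun x => ?_)
    exact (norm_of_nonneg (smoothTransition.nonneg _)).trans_le (smoothTransition.le_one _)
  have hIoc : IntegrableOn (fun x => smoothStep x / x ^ 3) (Ioc 0 1) :=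
    integrableOn_zero.congr_fun (fun x hx => by simp [smoothStep_of_le_one hx.2])
      measurableSet_Ioc
  rw [← Ioc_union_Ioi_eq_Ioi zero_le_one]
  exact hIoc.union hIoi

lemma integrableOn_cube_mul_one_sub_smoothStep :
    IntegrableOn (fun x => x ^ 3 * (1 - smoothStep x)) (Ioi 0) :=
  Continuous.integrableOn_Ioi_of_forall_gt_eq_zero (b := 2) (by fun_prop)
    fun x hx => by simp [smoothStep_of_two_le hx.le]

lemma integrableOn_cube_mul_log_mul_one_sub_smoothStep :
    IntegrableOn (fun x => x ^ 3 * log x * (1 - smoothStep x)) (Ioi 0) := by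
  have hcont : Continuous fun x => x ^ 3 * log x * (1 - smoothStep x) := by
    simp_rw [show ∀ x : ℝ, x ^ 3 * log x = x ^ 2 * (x * log x) by intro; ring]
    have := continuous_mul_log
    fun_prop
  exact hcont.integrableOn_Ioi_of_forall_gt_eq_zero (b := 2)
    fun x hx => by simp [smoothStep_of_two_le hx.le]

lemma exists_contDiff_vanishing_off_Ioo_moments_eq (c : Fin 3 → ℝ) :
    ∃ f : ℝ → ℝ, ContDiff ℝ (⊤ : ℕ∞) f ∧ (∀ x ∉ Ioo (1:ℝ) 2, f x = 0) ∧
      ∀ i, IntegrableOn (fun x => f x * momentWeights i x) (Ioi 0) ∧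
        ∫ x in Ioi 0, f x * momentWeights i x = c i := by
  let Ω : TopologicalSpace.Opens ℝ := ⟨Ioo 1 2, isOpen_Ioo⟩
  have hΩ : (Ω : Set ℝ) ⊆ Ioi 0 := fun x hx => zero_lt_one.trans hx.1
  have hw i : ContinuousOn (momentWeights i) Ω := (continuousOn_momentWeights i).mono hΩ
  obtain ⟨f, hf⟩ := TestFunction.exists_integral_mul_eq_of_linearIndependent (μ := volume) hw
    linearIndependent_momentWeights c
  have hf0 : ∀ x ∉ Ioo (1:ℝ) 2, f x = 0 := fun x hx =>
    image_eq_zero_of_notMem_tsupport fun h => hx (f.tsupport_subset h)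
  refine ⟨f, f.contDiff, hf0, fun i => ⟨(f.integrable_mul_of_continuousOn (hw i)).integrableOn, ?_⟩⟩
  rw [setIntegral_eq_integral_of_forall_compl_eq_zero fun x hx => by
    rw [hf0 x fun h => hx (hΩ h), zero_mul]]
  exact hf i

/-- Existence of a smooth cutoff χ on [0,∞), with χ = 0 on [0,1], χ = 1 on [2,∞),
satisfying the three orthogonality-type integral conditions. -/
theorem stmt7 :
    ∃ χ : ℝ → ℝ, ContDiffOn ℝ (⊤ : ℕ∞) χ (Set.Ici 0) ∧
      (∀ x, 0 ≤ x → x ≤ 1 → χ x = 0) ∧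
      (∀ x, 2 ≤ x → χ x = 1) ∧
      (∫ x in Set.Ioi (0:ℝ), χ x / x^3) = 0 ∧
      (∫ x in Set.Ioi (0:ℝ), x^3 * (1 - χ x)) = 0 ∧
      (∫ x in Set.Ioi (0:ℝ), x^3 * Real.log x * (1 - χ x)) = 0 := by
  obtain ⟨f, hf, hf0, hmoment⟩ := exists_contDiff_vanishing_off_Ioo_moments_eq
    ![-∫ x in Ioi 0, smoothStep x / x ^ 3, ∫ x in Ioi 0, x ^ 3 * (1 - smoothStep x),
      ∫ x in Ioi 0, x ^ 3 * log x * (1 - smoothStep x)]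
  refine ⟨fun x => smoothStep x + f x, (contDiff_smoothStep.add hf).contDiffOn,
    fun x _ hx => ?_, fun x hx => ?_, ?_, ?_, ?_⟩
  · simp [smoothStep_of_le_one hx, hf0 x fun h => (not_lt.2 hx) h.1]
  · simp [smoothStep_of_two_le hx, hf0 x fun h => (not_lt.2 hx) h.2]
  · simp_rw [show ∀ x, (smoothStep x + f x) / x ^ 3 =
        smoothStep x / x ^ 3 + f x * momentWeights 0 x by intro; simp [momentWeights]; ring]
    rw [integral_add integrableOn_smoothStep_div_cube (hmoment 0).1, (hmoment 0).2]
    simp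
  · simp_rw [show ∀ x, x ^ 3 * (1 - (smoothStep x + f x)) =
        x ^ 3 * (1 - smoothStep x) - f x * momentWeights 1 x by intro; simp [momentWeights]; ring]
    rw [integral_sub integrableOn_cube_mul_one_sub_smoothStep (hmoment 1).1, (hmoment 1).2]
    simp
  · simp_rw [show ∀ x, x ^ 3 * log x * (1 - (smoothStep x + f x)) =
        x ^ 3 * log x * (1 - smoothStep x) - f x * momentWeights 2 x by
          intro; simp [momentWeights]; ring]
    rw [integral_sub integrableOn_cube_mul_log_mul_one_sub_smoothStep (hmoment 2).1, (hmoment 2).2]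
    simp
end

section
/- Let f₂(R) = ( R²·(2R² − 1) − (R⁴ − 1)·log(1 + R²) + 2R²·Li₂(−R²) ) / (2R·(1 + R²)). Then for all R > 0, f₂''(R) + f₂'(R)/R − (1/R² − 8/(1 + R²)²)·f₂(R) = −2R/(1 + R²). -/
open Real

/-- The dilogarithm Li₂(x) = ∫₀^x (−log(1−y)/y) dy, defined for x ≤ 1. -/
noncomputable def Li2 (x : ℝ) : ℝ := ∫ y in (0:ℝ)..x, -Real.log (1 - y) / y

/-!
Write `f₂ = a₀ + b₀ · log (1 + s²) + c₀ · Li₂ (-s²)` with rational coefficients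
`a₀ = s (2s² - 1) / (2 (1 + s²))`, `b₀ = (1 - s²) / (2s)` and `c₀ = s / (1 + s²) = φ₀ / 2`.
Since `(log (1 + s²))' = 2s / (1 + s²)` and `(Li₂ (-s²))' = -2 log (1 + s²) / s`, such combinations
are closed under differentiation, so the left-hand side of the equation is again one. The equation
thus splits into three rational identities, one per coefficient; the one for `Li₂ (-s²)` says that
`φ₀` lies in the kernel of the linearized operator.
-/

open MeasureTheory in
theorem hasDerivAt_Li2 {x : ℝ} (hx : x < 0) : HasDerivAt Li2 (-log (1 - x) / x) x := by
  have hmeas : Measurable fun y : ℝ => -log (1 - y) / y := by fun_prop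
  have hint : IntervalIntegrable (fun y : ℝ => -log (1 - y) / y) volume 0 x := by
    rw [intervalIntegrable_iff, Set.uIoc_comm, Set.uIoc_of_le hx.le]
    refine (integrable_const (1 : ℝ)).mono' hmeas.aestronglyMeasurable ?_
    rw [ae_restrict_iff' measurableSet_Ioc]
    filter_upwards with y ⟨_, hy⟩
    rcases hy.eq_or_lt with rfl | hy
    · simp
    have hlog_nonneg : 0 ≤ log (1 - y) := log_nonneg (by linarith)
    have hlog_le : log (1 - y) ≤ -y := by linarith [log_le_sub_one_of_pos (by linarith : 0 < 1 - y)]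
    rw [← neg_div_neg_eq, neg_neg, norm_of_nonneg (div_nonneg hlog_nonneg (by linarith)),
      div_le_one (by linarith)]
    exact hlog_le
  have hcont : ContinuousAt (fun y : ℝ => -log (1 - y) / y) x :=
    ((continuousAt_const.sub continuousAt_id).log (by linarith : (0 : ℝ) < 1 - x).ne').neg.div
      continuousAt_id hx.ne
  exact intervalIntegral.integral_hasDerivAt_right hint
    hmeas.aestronglyMeasurable.stronglyMeasurableAtFilter hcont

theorem hasDerivAt_log_one_add_sq (s : ℝ) :
    HasDerivAt (fun t => log (1 + t ^ 2)) (2 * s / (1 + s ^ 2)) s := by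
  convert ((hasDerivAt_pow 2 s).const_add 1).log (by positivity) using 1
  ring

theorem hasDerivAt_Li2_neg_sq {s : ℝ} (hs : s ≠ 0) :
    HasDerivAt (fun t => Li2 (-t ^ 2)) (-2 * log (1 + s ^ 2) / s) s := by
  refine ((hasDerivAt_Li2 (neg_neg_of_pos (pow_two_pos_of_ne_zero hs))).comp s
    ((hasDerivAt_neg _).comp s (hasDerivAt_pow 2 s))).congr_deriv ?_
  rw [sub_neg_eq_add]
  field_simp
  ring

noncomputable def logDilogComb (p q r : ℝ → ℝ) (t : ℝ) : ℝ :=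
  p t + q t * log (1 + t ^ 2) + r t * Li2 (-t ^ 2)

theorem hasDerivAt_logDilogComb {p q r : ℝ → ℝ} {p' q' r' s : ℝ} (hs : s ≠ 0)
    (hp : HasDerivAt p p' s) (hq : HasDerivAt q q' s) (hr : HasDerivAt r r' s) :
    HasDerivAt (logDilogComb p q r)
      (p' + q s * (2 * s / (1 + s ^ 2)) + (q' - 2 * r s / s) * log (1 + s ^ 2)
        + r' * Li2 (-s ^ 2)) s := by
  refine ((hp.add (hq.mul (hasDerivAt_log_one_add_sq s))).add
    (hr.mul (hasDerivAt_Li2_neg_sq hs))).congr_deriv ?_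
  ring

namespace f₂

noncomputable def a₀ (s : ℝ) : ℝ := s * (2 * s ^ 2 - 1) / (2 * (1 + s ^ 2))
noncomputable def b₀ (s : ℝ) : ℝ := (1 - s ^ 2) / (2 * s)
noncomputable def c₀ (s : ℝ) : ℝ := s / (1 + s ^ 2)

noncomputable def a₁ (s : ℝ) : ℝ :=
  1 - 3 * (1 - s ^ 2) / (2 * (1 + s ^ 2) ^ 2) + (1 - s ^ 2) / (1 + s ^ 2)
noncomputable def b₁ (s : ℝ) : ℝ := -(1 + s ^ 2) / (2 * s ^ 2) - 2 / (1 + s ^ 2)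
noncomputable def c₁ (s : ℝ) : ℝ := (1 - s ^ 2) / (1 + s ^ 2) ^ 2

theorem hasDerivAt_a₀ (s : ℝ) :
    HasDerivAt a₀ (1 - 3 * (1 - s ^ 2) / (2 * (1 + s ^ 2) ^ 2)) s := by
  refine ((hasDerivAt_id' s).fun_mul (((hasDerivAt_pow 2 s).const_mul 2).sub_const 1) |>.fun_div
    (((hasDerivAt_pow 2 s).const_add 1).const_mul 2) (by positivity)).congr_deriv ?_
  field_simp
  ring

theorem hasDerivAt_b₀ {s : ℝ} (hs : s ≠ 0) : HasDerivAt b₀ (-(1 + s ^ 2) / (2 * s ^ 2)) s := by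
  refine (((hasDerivAt_pow 2 s).const_sub 1).fun_div ((hasDerivAt_id' s).const_mul 2)
    (mul_ne_zero two_ne_zero hs)).congr_deriv ?_
  field_simp
  ring

theorem hasDerivAt_c₀ (s : ℝ) : HasDerivAt c₀ (c₁ s) s := by
  refine ((hasDerivAt_id' s).fun_div ((hasDerivAt_pow 2 s).const_add 1)
    (by positivity)).congr_deriv ?_
  unfold c₁
  field_simp
  ring

theorem hasDerivAt_a₁ (s : ℝ) :
    HasDerivAt a₁ (-3 * s * (s ^ 2 - 3) / (1 + s ^ 2) ^ 3 - 4 * s / (1 + s ^ 2) ^ 2) s := by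
  have hu := (hasDerivAt_pow 2 s).const_add 1
  have hv := (hasDerivAt_pow 2 s).const_sub 1
  refine (((hv.const_mul 3).fun_div ((hu.fun_pow 2).const_mul 2) (by positivity)).const_sub 1
    |>.fun_add (hv.fun_div hu (by positivity))).congr_deriv ?_
  field_simp
  ring

theorem hasDerivAt_b₁ {s : ℝ} (hs : s ≠ 0) :
    HasDerivAt b₁ (1 / s ^ 3 + 4 * s / (1 + s ^ 2) ^ 2) s := by
  have hu := (hasDerivAt_pow 2 s).const_add 1
  refine ((hu.fun_neg.fun_div ((hasDerivAt_pow 2 s).const_mul 2) (by positivity)).fun_sub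
    ((hasDerivAt_const s 2).fun_div hu (by positivity))).congr_deriv ?_
  field_simp
  ring

theorem hasDerivAt_c₁ (s : ℝ) : HasDerivAt c₁ (2 * s * (s ^ 2 - 3) / (1 + s ^ 2) ^ 3) s := by
  refine (((hasDerivAt_pow 2 s).const_sub 1).fun_div (((hasDerivAt_pow 2 s).const_add 1).fun_pow 2)
    (by positivity)).congr_deriv ?_
  field_simp
  ring

theorem eq_logDilogComb (s : ℝ) :
    (s^2 * (2*s^2 - 1) - (s^4 - 1) * Real.log (1 + s^2) + 2*s^2 * Li2 (-s^2)) / (2*s*(1 + s^2))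
      = logDilogComb a₀ b₀ c₀ s := by
  unfold logDilogComb a₀ b₀ c₀
  rcases eq_or_ne s 0 with rfl | hs
  · simp -- both sides vanish at `s = 0` because `x / 0 = 0`
  field_simp
  ring

theorem hasDerivAt_logDilogComb₀ {s : ℝ} (hs : s ≠ 0) :
    HasDerivAt (logDilogComb a₀ b₀ c₀) (logDilogComb a₁ b₁ c₁ s) s := by
  refine (hasDerivAt_logDilogComb hs (hasDerivAt_a₀ s) (hasDerivAt_b₀ hs)
    (hasDerivAt_c₀ s)).congr_deriv ?_
  unfold logDilogComb b₀ c₀ a₁ b₁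
  field_simp

theorem linearized_const_coeff {s : ℝ} (hs : s ≠ 0) :
    (-3 * s * (s ^ 2 - 3) / (1 + s ^ 2) ^ 3 - 4 * s / (1 + s ^ 2) ^ 2)
      + b₁ s * (2 * s / (1 + s ^ 2)) + a₁ s / s - (1 / s ^ 2 - 8 / (1 + s ^ 2) ^ 2) * a₀ s
      = -2 * s / (1 + s ^ 2) := by
  unfold a₀ a₁ b₁
  field_simp
  ring

theorem linearized_log_coeff {s : ℝ} (hs : s ≠ 0) :
    (1 / s ^ 3 + 4 * s / (1 + s ^ 2) ^ 2 - 2 * c₁ s / s) + b₁ s / s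
      - (1 / s ^ 2 - 8 / (1 + s ^ 2) ^ 2) * b₀ s = 0 := by
  unfold b₀ b₁ c₁
  field_simp
  ring

theorem linearized_Li2_coeff {s : ℝ} (hs : s ≠ 0) :
    2 * s * (s ^ 2 - 3) / (1 + s ^ 2) ^ 3 + c₁ s / s
      - (1 / s ^ 2 - 8 / (1 + s ^ 2) ^ 2) * c₀ s = 0 := by
  unfold c₀ c₁
  field_simp
  ring

theorem linearized_eq {R : ℝ} (hR : R ≠ 0) :
    deriv (deriv (logDilogComb a₀ b₀ c₀)) R + deriv (logDilogComb a₀ b₀ c₀) R / R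
      - (1 / R ^ 2 - 8 / (1 + R ^ 2) ^ 2) * logDilogComb a₀ b₀ c₀ R = -2 * R / (1 + R ^ 2) := by
  have hderiv : deriv (logDilogComb a₀ b₀ c₀) =ᶠ[nhds R] logDilogComb a₁ b₁ c₁ :=
    (eventually_ne_nhds hR).mono fun s hs => (hasDerivAt_logDilogComb₀ hs).deriv
  rw [(hasDerivAt_logDilogComb₀ hR).deriv, hderiv.deriv_eq, (hasDerivAt_logDilogComb hR
    (hasDerivAt_a₁ R) (hasDerivAt_b₁ hR) (hasDerivAt_c₁ R)).deriv]
  unfold logDilogComb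
  linear_combination linearized_const_coeff hR + log (1 + R ^ 2) * linearized_log_coeff hR
    + Li2 (-R ^ 2) * linearized_Li2_coeff hR

end f₂

/-- f₂ solves the linearized elliptic equation with right-hand side −2R/(1 + R²). -/
theorem stmt9 :
    ∀ R : ℝ, 0 < R →
      deriv (deriv (fun s : ℝ =>
          (s^2 * (2*s^2 - 1) - (s^4 - 1) * Real.log (1 + s^2) + 2*s^2 * Li2 (-s^2))
            / (2*s*(1 + s^2)))) R
        + deriv (fun s : ℝ =>
            (s^2 * (2*s^2 - 1) - (s^4 - 1) * Real.log (1 + s^2) + 2*s^2 * Li2 (-s^2))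
              / (2*s*(1 + s^2))) R / R
        - (1/R^2 - 8/(1 + R^2)^2)
            * ((R^2 * (2*R^2 - 1) - (R^4 - 1) * Real.log (1 + R^2) + 2*R^2 * Li2 (-R^2))
                / (2*R*(1 + R^2)))
      = -2 * R / (1 + R^2) := by
  intro R hR
  simp only [f₂.eq_logDilogComb]
  exact f₂.linearized_eq hR.ne'
end

section
/- Let φ₀(R) = 2R/(1 + R²) and e₂(R) = (R⁴ + 4R²·log R − 1)/(2R·(R² + 1)). Then for all R > 0: (i) φ₀''(R) + φ₀'(R)/R − (1/R² − 8/(1 + R²)²)·φ₀(R) = 0; (ii) e₂''(R) + e₂'(R)/R − (1/R² − 8/(1 + R²)²)·e₂(R) = 0; (iii) the Wronskian identity φ₀(R)·e₂'(R) − φ₀'(R)·e₂(R) = 2/R holds. -/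
/-!
Write `φ₀ R = 2R/(1 + R²)`. Since `(R⁴ - 1)/(2R(R² + 1)) = (R² - 1)/(2R)`, the second solution splits
as `e₂ = (R² - 1)/(2R) + φ₀ log R`, which is the reduction-of-order ansatz. Applying the operator
`L u = u'' + u'/R - V u` with `V = 1/R² - 8/(1 + R²)²` gives
`L e₂ = L((R² - 1)/(2R)) + (log R) L φ₀ + 2 φ₀'/R`. Here `L φ₀ = 0`, and
`L((R² - 1)/(2R)) = 4(R² - 1)/(R(1 + R²)²) = -2 φ₀'/R`, so `L e₂ = 0`. Once all derivatives
are in closed form, each of the three identities is a rational-function identity in `R` and `log R`.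
-/

open Real Filter Topology

noncomputable section

def linearizedOp (u : ℝ → ℝ) (R : ℝ) : ℝ :=
  deriv (deriv u) R + deriv u R / R - (1/R^2 - 8/(1 + R^2)^2) * u R

theorem linearizedOp_eq {u u' : ℝ → ℝ} {u'' R : ℝ} (hu : ∀ᶠ x in 𝓝 R, HasDerivAt u (u' x) x)
    (hu' : HasDerivAt u' u'' R) :
    linearizedOp u R = u'' + u' R / R - (1/R^2 - 8/(1 + R^2)^2) * u R := by
  have hderiv : deriv u =ᶠ[𝓝 R] u' := hu.mono fun x hx => hx.deriv
  rw [linearizedOp, hderiv.deriv_eq, hu'.deriv, hu.self_of_nhds.deriv]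

theorem hasDerivAt_mul_log {f : ℝ → ℝ} {f' s : ℝ} (hf : HasDerivAt f f' s) (hs : s ≠ 0) :
    HasDerivAt (fun x => f x * log x) (f' * log s + f s / s) s := by
  simpa [div_eq_mul_inv] using hf.fun_mul (hasDerivAt_log hs)

def phi0 (s : ℝ) : ℝ := 2*s/(1 + s^2)

def phi0Deriv (s : ℝ) : ℝ := 2 * (1 - s^2) / (1 + s^2)^2

def phi0Deriv2 (s : ℝ) : ℝ := 4 * s * (s^2 - 3) / (1 + s^2)^3

theorem hasDerivAt_phi0 (s : ℝ) : HasDerivAt phi0 (phi0Deriv s) s := by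
  have hden : 1 + s^2 ≠ 0 := by positivity
  have h := ((hasDerivAt_id s).const_mul 2).fun_div ((hasDerivAt_pow 2 s).const_add 1) hden
  refine h.congr_deriv ?_
  simp only [phi0Deriv, id]
  field_simp
  ring

theorem hasDerivAt_phi0Deriv (s : ℝ) : HasDerivAt phi0Deriv (phi0Deriv2 s) s := by
  have hden : (1 + s^2)^2 ≠ 0 := by positivity
  have h := (((hasDerivAt_pow 2 s).const_sub 1).const_mul 2).fun_div
    (((hasDerivAt_pow 2 s).const_add 1).pow 2) hden
  refine h.congr_deriv ?_
  simp only [phi0Deriv2, Pi.pow_apply]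
  field_simp
  ring

def e2 (s : ℝ) : ℝ := (s^4 + 4*s^2*log s - 1)/(2*s*(s^2 + 1))

theorem e2_eq_add_phi0_mul_log (s : ℝ) : e2 s = (s^2 - 1) / (2*s) + phi0 s * log s := by
  rcases eq_or_ne s 0 with rfl | hs
  · simp [e2, phi0] -- both sides are junk values `x / 0 = 0`
  · unfold e2 phi0
    field_simp
    ring

def e2Deriv (s : ℝ) : ℝ := (s^2 + 1) / (2*s^2) + phi0Deriv s * log s + phi0 s / s

def e2Deriv2 (s : ℝ) : ℝ :=
  -1 / s^3 + phi0Deriv2 s * log s + 2 * phi0Deriv s / s - phi0 s / s^2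

theorem hasDerivAt_e2 {s : ℝ} (hs : s ≠ 0) : HasDerivAt e2 (e2Deriv s) s := by
  have hg := ((hasDerivAt_pow 2 s).sub_const 1).fun_div ((hasDerivAt_id s).const_mul 2) (by simpa)
  have h := hg.add (hasDerivAt_mul_log (hasDerivAt_phi0 s) hs)
  rw [show e2 = fun x => (x^2 - 1) / (2*x) + phi0 x * log x from funext e2_eq_add_phi0_mul_log]
  refine h.congr_deriv ?_
  simp only [e2Deriv, id]
  field_simp
  ring

theorem hasDerivAt_e2Deriv {s : ℝ} (hs : s ≠ 0) : HasDerivAt e2Deriv (e2Deriv2 s) s := by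
  have hg := ((hasDerivAt_pow 2 s).add_const 1).fun_div ((hasDerivAt_pow 2 s).const_mul 2)
    (by simpa)
  have h := (hg.add (hasDerivAt_mul_log (hasDerivAt_phi0Deriv s) hs)).add
    ((hasDerivAt_phi0 s).fun_div (hasDerivAt_id s) hs)
  refine h.congr_deriv ?_
  simp only [e2Deriv2, id]
  field_simp
  ring

theorem linearizedOp_phi0 {R : ℝ} (hR : R ≠ 0) : linearizedOp phi0 R = 0 := by
  rw [linearizedOp_eq (Eventually.of_forall hasDerivAt_phi0) (hasDerivAt_phi0Deriv R)]
  unfold phi0 phi0Deriv phi0Deriv2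
  field_simp
  ring

theorem linearizedOp_e2 {R : ℝ} (hR : R ≠ 0) : linearizedOp e2 R = 0 := by
  have hderiv : ∀ᶠ x in 𝓝 R, HasDerivAt e2 (e2Deriv x) x :=
    (eventually_ne_nhds hR).mono fun x hx => hasDerivAt_e2 hx
  rw [linearizedOp_eq hderiv (hasDerivAt_e2Deriv hR), e2_eq_add_phi0_mul_log]
  unfold e2Deriv e2Deriv2 phi0 phi0Deriv phi0Deriv2
  field_simp
  ring

theorem wronskian_phi0_e2 {R : ℝ} (hR : R ≠ 0) :
    phi0 R * deriv e2 R - deriv phi0 R * e2 R = 2 / R := by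
  rw [(hasDerivAt_e2 hR).deriv, (hasDerivAt_phi0 R).deriv, e2_eq_add_phi0_mul_log]
  unfold e2Deriv phi0 phi0Deriv
  field_simp
  ring

end

/-- φ₀(R) = 2R/(1+R²) and e₂(R) = (R⁴ + 4R² log R − 1)/(2R(R²+1)) are solutions of
the linearized operator equation, with Wronskian φ₀ e₂' − φ₀' e₂ = 2/R. -/
theorem stmt10 :
    ∀ R : ℝ, 0 < R →
      (deriv (deriv (fun s : ℝ => 2*s/(1 + s^2))) R
          + deriv (fun s : ℝ => 2*s/(1 + s^2)) R / R
          - (1/R^2 - 8/(1 + R^2)^2) * (2*R/(1 + R^2)) = 0) ∧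
      (deriv (deriv (fun s : ℝ => (s^4 + 4*s^2*Real.log s - 1)/(2*s*(s^2 + 1)))) R
          + deriv (fun s : ℝ => (s^4 + 4*s^2*Real.log s - 1)/(2*s*(s^2 + 1))) R / R
          - (1/R^2 - 8/(1 + R^2)^2)
              * ((R^4 + 4*R^2*Real.log R - 1)/(2*R*(R^2 + 1))) = 0) ∧
      ((2*R/(1 + R^2))
          * deriv (fun s : ℝ => (s^4 + 4*s^2*Real.log s - 1)/(2*s*(s^2 + 1))) R
        - deriv (fun s : ℝ => 2*s/(1 + s^2)) R
          * ((R^4 + 4*R^2*Real.log R - 1)/(2*R*(R^2 + 1))) = 2/R) := by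
  intro R hR
  exact ⟨linearizedOp_phi0 hR.ne', linearizedOp_e2 hR.ne', wronskian_phi0_e2 hR.ne'⟩
end

section
/- The improper integral ∫₁^∞ ( √(a² − 1) − a + 1/(2a) ) da converges and equals (1 − 2·log 2)/4. -/
/-!
On `(1, ∞)` the integrand has the explicit primitive
`G a = (a √(a² − 1) − arcosh a − a² + log a) / 2`, and it is nonpositive there since
`(a − 1/(2a))² = a² − 1 + 1/(4a²)`. Hence the integral of the nonpositive derivative of `G`
converges and equals `lim_{a→∞} G a − G 1`. Writing `√(a² − 1) = a t` with `t = √(1 − a⁻²) → 1`,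
one gets `a √(a² − 1) − a² = −1/(1 + t) → −1/2` and `arcosh a − log a = log (1 + t) → log 2`,
so `G → −1/4 − (log 2)/2`, while `G 1 = −1/2`.
-/

open Real MeasureTheory Filter Topology Set

noncomputable def sqrtSqSubOnePrimitive (a : ℝ) : ℝ :=
  (a * √(a ^ 2 - 1) - arcosh a) / 2

noncomputable def defectPrimitive (a : ℝ) : ℝ :=
  sqrtSqSubOnePrimitive a - a ^ 2 / 2 + log a / 2

lemma hasDerivAt_sqrtSqSubOnePrimitive {x : ℝ} (hx : x ∈ Ioi 1) :
    HasDerivAt sqrtSqSubOnePrimitive √(x ^ 2 - 1) x := by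
  have hx2 : 0 < x ^ 2 - 1 := by simp only [mem_Ioi] at hx; nlinarith
  have hs : √(x ^ 2 - 1) ≠ 0 := (sqrt_pos.mpr hx2).ne'
  have hsqrt : HasDerivAt (fun a : ℝ => √(a ^ 2 - 1)) (2 * x / (2 * √(x ^ 2 - 1))) x := by
    simpa using ((hasDerivAt_pow 2 x).sub_const 1).sqrt hx2.ne'
  refine (((hasDerivAt_id' x).mul hsqrt).sub (hasDerivAt_arcosh hx)).div_const 2 |>.congr_deriv ?_
  field_simp
  rw [sq_sqrt hx2.le]
  ring

lemma hasDerivAt_defectPrimitive {x : ℝ} (hx : x ∈ Ioi 1) :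
    HasDerivAt defectPrimitive (√(x ^ 2 - 1) - x + 1 / (2 * x)) x := by
  have hx0 : x ≠ 0 := (zero_lt_one.trans hx).ne'
  refine ((hasDerivAt_sqrtSqSubOnePrimitive hx).sub ((hasDerivAt_pow 2 x).div_const 2)).add
    ((hasDerivAt_log hx0).div_const 2) |>.congr_deriv ?_
  field_simp
  ring

lemma continuousWithinAt_defectPrimitive_one : ContinuousWithinAt defectPrimitive (Ici 1) 1 := by
  have harcosh : ContinuousWithinAt arcosh (Ici 1) 1 := continuousOn_arcosh 1 self_mem_Ici
  have hlog : ContinuousWithinAt log (Ici 1) 1 :=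
    (continuousAt_log one_ne_zero).continuousWithinAt
  unfold defectPrimitive sqrtSqSubOnePrimitive
  fun_prop (disch := assumption)

lemma defectPrimitive_one : defectPrimitive 1 = -1 / 2 := by
  norm_num [defectPrimitive, sqrtSqSubOnePrimitive, arcosh_zero]

lemma sqrt_sq_sub_one_eq_mul {a : ℝ} (ha : 0 < a) : √(a ^ 2 - 1) = a * √(1 - (a ^ 2)⁻¹) := by
  calc √(a ^ 2 - 1) = √(a ^ 2 * (1 - (a ^ 2)⁻¹)) := by congr 1; field_simp
    _ = a * √(1 - (a ^ 2)⁻¹) := by rw [sqrt_mul (sq_nonneg a), sqrt_sq ha.le]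

lemma sq_mul_sqrt_one_sub_inv_sq {a : ℝ} (ha : 1 ≤ a) : (a * √(1 - (a ^ 2)⁻¹)) ^ 2 = a ^ 2 - 1 := by
  rw [← sqrt_sq_sub_one_eq_mul (by positivity), sq_sqrt (by nlinarith)]

lemma tendsto_sqrt_one_sub_inv_sq_atTop : Tendsto (fun a : ℝ => √(1 - (a ^ 2)⁻¹)) atTop (𝓝 1) := by
  have h : Tendsto (fun a : ℝ => (a ^ 2)⁻¹) atTop (𝓝 0) :=
    (tendsto_pow_atTop two_ne_zero).inv_tendsto_atTop
  simpa using ((tendsto_const_nhds (x := (1 : ℝ))).sub h).sqrt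

lemma tendsto_mul_sqrt_sq_sub_one_sub_sq_atTop :
    Tendsto (fun a : ℝ => a * √(a ^ 2 - 1) - a ^ 2) atTop (𝓝 (-1 / 2)) := by
  have h : Tendsto (fun a : ℝ => -1 / (1 + √(1 - (a ^ 2)⁻¹))) atTop (𝓝 (-1 / (1 + 1))) :=
    tendsto_const_nhds.div (tendsto_sqrt_one_sub_inv_sq_atTop.const_add 1) (by norm_num)
  rw [show (-1 : ℝ) / (1 + 1) = -1 / 2 by norm_num] at h
  refine h.congr' ?_
  filter_upwards [eventually_ge_atTop 1] with a ha
  have hsq := sq_mul_sqrt_one_sub_inv_sq ha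
  rw [sqrt_sq_sub_one_eq_mul (by positivity), div_eq_iff (by positivity)]
  linear_combination -hsq

lemma tendsto_arcosh_sub_log_atTop :
    Tendsto (fun a : ℝ => arcosh a - log a) atTop (𝓝 (log 2)) := by
  have h : Tendsto (fun a : ℝ => log (1 + √(1 - (a ^ 2)⁻¹))) atTop (𝓝 (log (1 + 1))) :=
    (continuousAt_log (by norm_num)).tendsto.comp (tendsto_sqrt_one_sub_inv_sq_atTop.const_add 1)
  rw [one_add_one_eq_two] at h
  refine h.congr' ?_
  filter_upwards [eventually_gt_atTop 0] with a ha
  rw [arcosh, sqrt_sq_sub_one_eq_mul ha, ← mul_one_add, log_mul ha.ne' (by positivity)]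
  ring

lemma tendsto_defectPrimitive_atTop :
    Tendsto defectPrimitive atTop (𝓝 (-1 / 4 - log 2 / 2)) := by
  have h := (tendsto_mul_sqrt_sq_sub_one_sub_sq_atTop.sub tendsto_arcosh_sub_log_atTop).div_const 2
  refine (h.congr fun a => ?_).trans (le_of_eq (by congr 1; ring))
  simp only [defectPrimitive, sqrtSqSubOnePrimitive]
  ring

lemma sqrt_sq_sub_one_sub_add_inv_nonpos {a : ℝ} (ha : 1 ≤ a) :
    √(a ^ 2 - 1) - a + 1 / (2 * a) ≤ 0 := by
  have ha0 : 0 < a := zero_lt_one.trans_le ha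
  have hsq : (a - 1 / (2 * a)) ^ 2 = a ^ 2 - 1 + 1 / (4 * a ^ 2) := by field_simp; ring
  have hle : √(a ^ 2 - 1) ≤ a - 1 / (2 * a) := by
    rw [sqrt_le_iff]
    constructor
    · rw [sub_nonneg, div_le_iff₀ (by positivity)]; nlinarith
    · rw [hsq]; linarith [show 0 < 1 / (4 * a ^ 2) by positivity]
  linarith

/-- ∫₁^∞ (√(a² − 1) − a + 1/(2a)) da converges and equals (1 − 2 log 2)/4. -/
theorem stmt15 :
    IntegrableOn (fun a : ℝ => Real.sqrt (a^2 - 1) - a + 1/(2*a)) (Set.Ioi 1) ∧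
    (∫ a in Set.Ioi (1:ℝ), (Real.sqrt (a^2 - 1) - a + 1/(2*a)))
      = (1 - 2*Real.log 2)/4 := by
  have hderiv : ∀ x ∈ Ioi 1, HasDerivAt defectPrimitive (√(x ^ 2 - 1) - x + 1 / (2 * x)) x :=
    fun _ hx => hasDerivAt_defectPrimitive hx
  have hnonpos : ∀ x ∈ Ioi (1 : ℝ), √(x ^ 2 - 1) - x + 1 / (2 * x) ≤ 0 :=
    fun _ hx => sqrt_sq_sub_one_sub_add_inv_nonpos (le_of_lt hx)
  refine ⟨integrableOn_Ioi_deriv_of_nonpos continuousWithinAt_defectPrimitive_one hderiv hnonpos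
    tendsto_defectPrimitive_atTop, ?_⟩
  rw [integral_Ioi_of_hasDerivAt_of_nonpos continuousWithinAt_defectPrimitive_one hderiv hnonpos
    tendsto_defectPrimitive_atTop, defectPrimitive_one]
  ring
end
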